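/- arXiv:math/0511425 — 7 statements merged into one kernel-verified Lean document; each statement's English description precedes it below -/
import Mathlib

section
/- For binary words x and y, x is a suffix of y if and only if μ(x) is a suffix of μ(y), where μ is the Thue-Morse morphism. -/
/-- The Thue-Morse morphism: μ(0)=01, μ(1)=10, with 0 = `false`, 1 = `true`. -/
def mu (w : List Bool) : List Bool := w.flatMap fun b => [b, !b]

/-!
Every letter is sent by μ to a block of length 2. A suffix of μ(y) as long as μ(x) therefore
starts at a block boundary, so it is μ of a suffix of y, and injectivity of μ identifies that
suffix with x.
-/

namespace List

variable {α β : Type*} {f : α → List β} {k : ℕ}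

theorem length_flatMap_of_length_eq (hf : ∀ a, (f a).length = k) (l : List α) :
    (l.flatMap f).length = k * l.length := by
  induction l with
  | nil => simp
  | cons a l ih => rw [flatMap_cons, length_append, ih, hf, length_cons, Nat.mul_succ, add_comm]

theorem drop_flatMap_of_length_eq (hf : ∀ a, (f a).length = k) (l : List α) (n : ℕ) :
    (l.flatMap f).drop (k * n) = (l.drop n).flatMap f := by
  induction l generalizing n with
  | nil => simp
  | cons a l ih =>
    cases n with
    | zero => simp
    | succ n =>
      rw [flatMap_cons, Nat.mul_succ, add_comm, ← drop_drop, drop_left' (hf a), ih, drop_succ_cons]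

theorem flatMap_injective_of_length_eq (hf : ∀ a, (f a).length = k) (hk : k ≠ 0)
    (hinj : Function.Injective f) : Function.Injective (flatMap f) := by
  have hne : ∀ a, f a ≠ [] := fun a ha => hk (by rw [← hf a, ha, length_nil])
  intro l₁ l₂ h
  induction l₁ generalizing l₂ with
  | nil =>
    cases l₂ with
    | nil => rfl
    | cons b l₂ => simp [hne] at h
  | cons a l₁ ih =>
    cases l₂ with
    | nil => simp [hne] at h
    | cons b l₂ =>
      rw [flatMap_cons, flatMap_cons] at h
      obtain ⟨hab, hl⟩ := append_inj h (by rw [hf, hf])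
      rw [hinj hab, ih hl]

theorem flatMap_suffix_flatMap_iff_of_length_eq (hf : ∀ a, (f a).length = k) (hk : k ≠ 0)
    (hinj : Function.Injective f) {l₁ l₂ : List α} :
    l₁.flatMap f <:+ l₂.flatMap f ↔ l₁ <:+ l₂ := by
  refine ⟨fun h => ?_, fun h => h.flatMap f⟩
  rw [suffix_iff_eq_drop, length_flatMap_of_length_eq hf, length_flatMap_of_length_eq hf,
    ← Nat.mul_sub, drop_flatMap_of_length_eq hf] at h
  exact suffix_iff_eq_drop.2 (flatMap_injective_of_length_eq hf hk hinj h)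

end List

theorem mu_suffix_iff (x y : List Bool) : x <:+ y ↔ mu x <:+ mu y :=
  (List.flatMap_suffix_flatMap_iff_of_length_eq (k := 2) (fun _ => rfl) two_ne_zero
    fun _ _ h => (List.cons.inj h).1).symm
end

section
/- No word of the form μ(w), where w is a binary word, contains 000 as a subword. -/
/-! `mu w` is a concatenation of blocks `[c, !c]`. A window of length 3 starting at a block
boundary has distinct first two letters; one starting inside a block has distinct last two
letters. -/

@[simp]
lemma mu_nil : mu [] = [] := rfl

@[simp]
lemma mu_cons (b : Bool) (w : List Bool) : mu (b :: w) = b :: (!b) :: mu w := rfl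

lemma not_pair_prefix_mu (b : Bool) (w : List Bool) : ¬ [b, b] <+: mu w := by
  cases w with
  | nil => simp
  | cons c w => cases b <;> cases c <;> simp

lemma not_triple_infix_mu (b : Bool) (w : List Bool) : ¬ [b, b, b] <:+: mu w := by
  induction w with
  | nil => simp
  | cons c w ih =>
    rw [mu_cons, List.infix_cons_iff, List.infix_cons_iff]
    rintro (hpre | hpre | hinf)
    · cases b <;> cases c <;> simp at hpre
    · rw [List.cons_prefix_cons] at hpre
      exact not_pair_prefix_mu b w hpre.2
    · exact ih hinf

theorem mu_no_cube_000 (w : List Bool) :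
    ¬ ([false, false, false] <:+: mu w) :=
  not_triple_infix_mu false w
end

section
/- Let α > 2 be a real number and w a binary word. Then w is α power-free if and only if μ(w) is α power-free. -/
/-- `u` has period `p`: u(i) = u(i+p) for all valid indices. -/
def HasPeriod (u : List Bool) (p : ℕ) : Prop :=
  ∀ i, i + p < u.length → u.getD i false = u.getD (i + p) false

/-- `w` is α power-free: no subword `u` of `w` has a period `p ≥ 1` with |u|/p ≥ α. -/
def PowerFree (α : ℝ) (w : List Bool) : Prop :=
  ∀ u p, u <:+: w → 1 ≤ p → HasPeriod u p → (u.length : ℝ) < α * p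

@[simp] lemma mu_append (u w : List Bool) : mu (u ++ w) = mu u ++ mu w := by
  simp [mu]

@[simp] lemma length_mu (w : List Bool) : (mu w).length = 2 * w.length := by
  induction w with
  | nil => rfl
  | cons b w ih => simp [ih]; ring

@[simp] lemma count_mu (b : Bool) (w : List Bool) : (mu w).count b = w.length := by
  induction w with
  | nil => rfl
  | cons c w ih => cases b <;> cases c <;> simp [ih]

lemma take_mu (w : List Bool) (k : ℕ) : (mu w).take (2 * k) = mu (w.take k) := by
  induction w generalizing k with
  | nil => simp
  | cons b w ih => cases k with
    | zero => simp
    | succ k => simp [Nat.mul_succ, ← ih]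

lemma drop_mu (w : List Bool) (k : ℕ) : (mu w).drop (2 * k) = mu (w.drop k) := by
  induction w generalizing k with
  | nil => simp
  | cons b w ih => cases k with
    | zero => simp
    | succ k => simp [Nat.mul_succ, ← ih]

lemma getD_mu_two_mul (w : List Bool) (i : ℕ) :
    (mu w).getD (2 * i) false = w.getD i false := by
  induction w generalizing i with
  | nil => simp
  | cons b w ih => cases i with
    | zero => simp
    | succ i => simpa [Nat.mul_succ] using ih i

lemma getD_mu_two_mul_add_one {w : List Bool} {i : ℕ} (h : i < w.length) :
    (mu w).getD (2 * i + 1) false = !w.getD i false := by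
  induction w generalizing i with
  | nil => simp at h
  | cons b w ih => cases i with
    | zero => simp
    | succ i => simpa [Nat.mul_succ] using ih (by simpa using h)

lemma mu_infix_mu {u w : List Bool} (h : u <:+: w) : mu u <:+: mu w := by
  obtain ⟨s, t, rfl⟩ := h
  exact ⟨mu s, mu t, by simp⟩

lemma List.IsInfix.exists_drop_take {α : Type*} {v x : List α} (h : v <:+: x) :
    ∃ j, j + v.length ≤ x.length ∧ (x.drop j).take v.length = v := by
  obtain ⟨s, t, rfl⟩ := h
  exact ⟨s.length, by simp, by simp⟩

lemma getD_drop_take {α : Type*} (x : List α) (d : α) {j n i : ℕ} (h : i < n) :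
    ((x.drop j).take n).getD i d = x.getD (j + i) d := by
  simp [h]

namespace HasPeriod

variable {u : List Bool} {p : ℕ}

lemma drop (h : HasPeriod u p) (k : ℕ) : HasPeriod (u.drop k) p := by
  intro i hi
  simp only [List.length_drop] at hi
  simpa [Nat.add_assoc] using h (k + i) (by omega)

lemma take (h : HasPeriod u p) (k : ℕ) : HasPeriod (u.take k) p := by
  intro i hi
  simp only [List.length_take, lt_min_iff] at hi
  simpa [hi.1, show i < k by omega] using h i (by omega)

lemma mu (h : HasPeriod u p) : HasPeriod (_root_.mu u) (2 * p) := by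
  intro k hk
  rw [length_mu] at hk
  obtain ⟨i, rfl | rfl⟩ := Nat.even_or_odd' k
  · rw [← Nat.mul_add, getD_mu_two_mul, getD_mu_two_mul]
    exact h i (by omega)
  · rw [show 2 * i + 1 + 2 * p = 2 * (i + p) + 1 by ring, getD_mu_two_mul_add_one (by omega),
      getD_mu_two_mul_add_one (by omega), h i (by omega)]

lemma take_append_take (h : HasPeriod u p) (hu : u.length = 2 * p) :
    u = u.take p ++ u.take p := by
  conv_lhs => rw [← List.take_append_drop p u]
  congr 1
  apply List.ext_getElem (by simp; omega)
  intro i h₁ h₂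
  simp only [List.length_drop, List.length_take, lt_min_iff] at h₁ h₂
  have := h i (by omega)
  rw [List.getD_eq_getElem _ _ (by omega), List.getD_eq_getElem _ _ (by omega)] at this
  simp [this, Nat.add_comm]

lemma getD_of_drop_take {x : List Bool} {j n m : ℕ} (h : HasPeriod ((x.drop j).take n) p)
    (hn : j + n ≤ x.length) (h₁ : j ≤ m) (h₂ : m + p < j + n) :
    x.getD m false = x.getD (m + p) false := by
  have := h (m - j) (by simp; omega)
  rwa [getD_drop_take _ _ (by omega), getD_drop_take _ _ (by omega), Nat.add_sub_cancel' h₁,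
    ← Nat.add_assoc, Nat.add_sub_cancel' h₁] at this

end HasPeriod

theorem length_le_of_hasPeriod_of_odd {v w : List Bool} {p : ℕ} (hv : v <:+: mu w)
    (hper : HasPeriod v p) (hp : Odd p) : v.length ≤ 2 * p := by
  by_contra! hlen
  obtain ⟨j, hj, hv⟩ := hv.exists_drop_take
  rw [length_mu] at hj
  set r := j % 2
  set s := (j + r) / 2
  have hz : (v.drop r).take (2 * p) = mu ((w.drop s).take p) := by
    rw [← take_mu, ← drop_mu, ← hv, List.drop_take, List.take_take, List.drop_drop]
    congr 2 <;> omega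
  have hzlen : ((v.drop r).take (2 * p)).length = 2 * p := by simp; omega
  have hcount := congrArg (List.count true) ((hper.drop r).take (2 * p) |>.take_append_take hzlen)
  rw [List.count_append, hz, count_mu] at hcount
  obtain ⟨k, rfl⟩ := hp
  simp only [List.length_take, List.length_drop] at hcount
  omega

theorem exists_infix_hasPeriod_of_hasPeriod_two_mul {v w : List Bool} {q : ℕ}
    (hv : v <:+: mu w) (hper : HasPeriod v (2 * q)) (hlen : 2 * q < v.length) :
    ∃ u, u <:+: w ∧ HasPeriod u q ∧ v.length ≤ 2 * u.length := by
  obtain ⟨j, hj, hv⟩ := hv.exists_drop_take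
  rw [← hv] at hper
  set n := v.length
  rw [length_mu] at hj
  set s := j / 2
  set e := (j + n + 1) / 2
  refine ⟨(w.drop s).take (e - s),
    (List.take_prefix _ _).isInfix.trans (List.drop_suffix _ _).isInfix, fun i hi => ?_,
    by simp; omega⟩
  simp only [List.length_take, List.length_drop] at hi
  rw [getD_drop_take _ _ (by omega), getD_drop_take _ _ (by omega)]
  by_cases heven : j ≤ 2 * (s + i) ∧ 2 * (s + i) + 2 * q < j + n
  · rw [← getD_mu_two_mul w, ← getD_mu_two_mul w,
      show 2 * (s + (i + q)) = 2 * (s + i) + 2 * q by ring]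
    exact hper.getD_of_drop_take (by simpa using hj) heven.1 heven.2
  · rw [← Bool.not_inj_iff, ← getD_mu_two_mul_add_one (by omega),
      ← getD_mu_two_mul_add_one (by omega),
      show 2 * (s + (i + q)) + 1 = 2 * (s + i) + 1 + 2 * q by ring]
    exact hper.getD_of_drop_take (by simpa using hj) (by omega) (by omega)

theorem PowerFree.of_mu {α : ℝ} {w : List Bool} (h : PowerFree α (mu w)) : PowerFree α w := by
  intro u p hu hp hper
  have := h (mu u) (2 * p) (mu_infix_mu hu) (by omega) hper.mu
  push_cast [length_mu] at this
  linarith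

theorem PowerFree.mu {α : ℝ} (hα : 2 < α) {w : List Bool} (h : PowerFree α w) :
    PowerFree α (_root_.mu w) := by
  intro v p hv hp hper
  have hp' : (0 : ℝ) < p := by exact_mod_cast hp
  rcases le_or_gt v.length (2 * p) with hshort | hlong
  · calc (v.length : ℝ) ≤ 2 * p := by exact_mod_cast hshort
      _ < α * p := by gcongr
  obtain ⟨q, rfl⟩ | hodd := Nat.even_or_odd p
  · rw [← two_mul] at hper
    obtain ⟨u, hu, huper, hvu⟩ :=
      exists_infix_hasPeriod_of_hasPeriod_two_mul hv hper (by omega)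
    have := h u q hu (by omega) huper
    calc (v.length : ℝ) ≤ 2 * u.length := by exact_mod_cast hvu
      _ < 2 * (α * q) := by linarith
      _ = α * ↑(q + q) := by push_cast; ring
  · exact absurd (length_le_of_hasPeriod_of_odd hv hper hodd) (by omega)

theorem shur (α : ℝ) (hα : 2 < α) (w : List Bool) :
    PowerFree α w ↔ PowerFree α (mu w) :=
  ⟨PowerFree.mu hα, PowerFree.of_mu⟩
end

section
/- For any position i, there is at most one square in the Thue-Morse word t beginning at position i. That is, if xx and yy are both subwords of t occurring at position i, then x = y. -/
/-- The Thue-Morse word: t(n) is the parity of the number of 1's in binary expansion of n. -/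
def tm (n : ℕ) : Bool := (Nat.digits 2 n).sum % 2 == 1

/-- The finite word `u` occurs in the infinite word `w` at position `i`. -/
def OccursAt (w : ℕ → Bool) (u : List Bool) (i : ℕ) : Prop :=
  ∀ j < u.length, u.getD j false = w (i + j)

lemma tm_two_mul (n : ℕ) : tm (2 * n) = tm n := by
  rcases Nat.eq_zero_or_pos n with h | h
  · simp [h]
  · unfold tm
    rw [Nat.digits_def' (by norm_num : 1 < 2) (by omega)]
    simp [Nat.mul_div_cancel_left, Nat.mul_mod_right]

lemma tm_two_mul_add_one (n : ℕ) : tm (2 * n + 1) = !tm n := by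
  unfold tm
  rw [Nat.digits_def' (by norm_num : 1 < 2) (by omega)]
  have h1 : (2 * n + 1) % 2 = 1 := by omega
  have h2 : (2 * n + 1) / 2 = n := by omega
  rw [h1, h2]
  rcases Nat.mod_two_eq_zero_or_one (Nat.digits 2 n).sum with h | h <;>
    simp [List.sum_cons, Nat.add_mod, h]

lemma tm_alt (m : ℕ) : tm (2 * m + 1) = !tm (2 * m) := by
  rw [tm_two_mul_add_one, tm_two_mul]

/-- From a period-`p` condition with `p` odd, the word alternates on the second half. -/
lemma alt_of_period (p i : ℕ) (hodd : p % 2 = 1)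
    (H : ∀ k, k < p → tm (i + k + p) = tm (i + k)) :
    ∀ x, i + p ≤ x → x + 2 ≤ i + 2 * p → tm (x + 1) = !tm x := by
  intro x hx1 hx2
  rcases Nat.even_or_odd x with ⟨u, hu⟩ | ⟨u, hu⟩
  · have h := tm_alt u
    rw [show 2 * u = x from by omega] at h
    exact h
  · obtain ⟨v, hv⟩ : ∃ v, x = 2 * v + p := ⟨(x - p) / 2, by omega⟩
    have hA := H (2 * v - i) (by omega)
    rw [show i + (2 * v - i) + p = x from by omega,
        show i + (2 * v - i) = 2 * v from by omega] at hA
    have hB := H (2 * v + 1 - i) (by omega)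
    rw [show i + (2 * v + 1 - i) + p = x + 1 from by omega,
        show i + (2 * v + 1 - i) = 2 * v + 1 from by omega] at hB
    rw [hB, tm_alt v, ← hA]

/-- Helper: contradiction from three period-3 equations at an even base. -/
lemma three_chain (m : ℕ) (h03 : tm (2 * m + 3) = tm (2 * m))
    (h14 : tm (2 * m + 4) = tm (2 * m + 1))
    (h25 : tm (2 * m + 5) = tm (2 * m + 2)) : False := by
  have a1 := tm_alt m
  have a2 : tm (2 * m + 3) = !tm (2 * m + 2) := by
    have := tm_alt (m + 1)
    rw [show 2 * (m + 1) + 1 = 2 * m + 3 from by omega,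
        show 2 * (m + 1) = 2 * m + 2 from by omega] at this
    exact this
  have a3 : tm (2 * m + 5) = !tm (2 * m + 4) := by
    have := tm_alt (m + 2)
    rw [show 2 * (m + 2) + 1 = 2 * m + 5 from by omega,
        show 2 * (m + 2) = 2 * m + 4 from by omega] at this
    exact this
  have e1 : tm (2 * m) = !tm (2 * m + 2) := by rw [← h03]; exact a2
  have e2 : tm (2 * m + 2) = tm (2 * m) := by
    rw [← h25, a3, h14, a1, Bool.not_not]
  rw [e2] at e1
  simp at e1

/-- The Thue–Morse word is overlap-free. -/
lemma no_overlap : ∀ p, 1 ≤ p → ∀ i, ¬ (∀ k, k ≤ p → tm (i + k + p) = tm (i + k)) := by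
  intro p
  induction p using Nat.strong_induction_on with
  | _ p IH =>
    intro hp i H
    rcases Nat.even_or_odd p with ⟨p', hpe⟩ | ⟨p', hpo⟩
    · -- p even
      have hp2 : p = 2 * p' := by omega
      have hp'1 : 1 ≤ p' := by omega
      rcases Nat.even_or_odd i with ⟨i', hie⟩ | ⟨i', hio⟩
      · apply IH p' (by omega) hp'1 i'
        intro j hj
        have h := H (2 * j) (by omega)
        rw [show i + 2 * j + p = 2 * (i' + j + p') from by omega,
            show i + 2 * j = 2 * (i' + j) from by omega,
            tm_two_mul, tm_two_mul] at h
        exact h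
      · apply IH p' (by omega) hp'1 i'
        intro j hj
        have h := H (2 * j) (by omega)
        rw [show i + 2 * j + p = 2 * (i' + j + p') + 1 from by omega,
            show i + 2 * j = 2 * (i' + j) + 1 from by omega,
            tm_two_mul_add_one, tm_two_mul_add_one] at h
        simpa using h
    · -- p odd
      rcases (show p = 1 ∨ p = 3 ∨ 5 ≤ p from by omega) with h1 | h3 | h5
      · subst h1
        rcases Nat.even_or_odd i with ⟨m, hm⟩ | ⟨m, hm⟩
        · have h := H 0 (by omega)
          rw [show i + 0 + 1 = 2 * m + 1 from by omega,
              show i + 0 = 2 * m from by omega, tm_alt] at h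
          simp at h
        · have h := H 1 (by omega)
          rw [show i + 1 + 1 = 2 * (m + 1) + 1 from by omega,
              show i + 1 = 2 * (m + 1) from by omega, tm_alt] at h
          simp at h
      · subst h3
        rcases Nat.even_or_odd i with ⟨m, hm⟩ | ⟨m, hm⟩
        · refine three_chain m ?_ ?_ ?_
          · have h := H 0 (by omega)
            rw [show i + 0 + 3 = 2 * m + 3 from by omega,
                show i + 0 = 2 * m from by omega] at h
            exact h
          · have h := H 1 (by omega)
            rw [show i + 1 + 3 = 2 * m + 4 from by omega,
                show i + 1 = 2 * m + 1 from by omega] at h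
            exact h
          · have h := H 2 (by omega)
            rw [show i + 2 + 3 = 2 * m + 5 from by omega,
                show i + 2 = 2 * m + 2 from by omega] at h
            exact h
        · refine three_chain (m + 1) ?_ ?_ ?_
          · have h := H 1 (by omega)
            rw [show i + 1 + 3 = 2 * (m + 1) + 3 from by omega,
                show i + 1 = 2 * (m + 1) from by omega] at h
            exact h
          · have h := H 2 (by omega)
            rw [show i + 2 + 3 = 2 * (m + 1) + 4 from by omega,
                show i + 2 = 2 * (m + 1) + 1 from by omega] at h
            exact h
          · have h := H 3 (by omega)
            rw [show i + 3 + 3 = 2 * (m + 1) + 5 from by omega,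
                show i + 3 = 2 * (m + 1) + 2 from by omega] at h
            exact h
      · -- p odd, p ≥ 5
        have halt := alt_of_period p i (by omega) (fun k hk => H k (Nat.le_of_lt hk))
        apply IH 2 (by omega) (by omega) (i + p)
        intro k hk
        have a1 : tm (i + p + k + 1) = !tm (i + p + k) :=
          halt (i + p + k) (by omega) (by omega)
        have a2 : tm (i + p + k + 2) = !tm (i + p + k + 1) := by
          have := halt (i + p + k + 1) (by omega) (by omega)
          rwa [show i + p + k + 1 + 1 = i + p + k + 2 from by omega] at this
        rw [a2, a1, Bool.not_not]

/-- A square of period `p` occurs at position `i`. -/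
def SqAt (p i : ℕ) : Prop := ∀ k, k < p → tm (i + k + p) = tm (i + k)

lemma sq_even (p' i : ℕ) (hp' : 1 ≤ p') (h : SqAt (2 * p') i) :
    i % 2 = 0 ∧ SqAt p' (i / 2) := by
  rcases Nat.even_or_odd i with ⟨i', hie⟩ | ⟨i', hio⟩
  · refine ⟨by omega, ?_⟩
    intro j hj
    have hh := h (2 * j) (by omega)
    rw [show i + 2 * j + 2 * p' = 2 * (i' + j + p') from by omega,
        show i + 2 * j = 2 * (i' + j) from by omega, tm_two_mul, tm_two_mul] at hh
    rw [show i / 2 = i' from by omega]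
    exact hh
  · exfalso
    apply no_overlap p' hp' i'
    intro j hj
    rcases Nat.lt_or_ge j p' with hjl | hjg
    · have hh := h (2 * j) (by omega)
      rw [show i + 2 * j + 2 * p' = 2 * (i' + j + p') + 1 from by omega,
          show i + 2 * j = 2 * (i' + j) + 1 from by omega,
          tm_two_mul_add_one, tm_two_mul_add_one] at hh
      simpa using hh
    · have hh := h (2 * j - 1) (by omega)
      rw [show i + (2 * j - 1) + 2 * p' = 2 * (i' + j + p') from by omega,
          show i + (2 * j - 1) = 2 * (i' + j) from by omega,
          tm_two_mul, tm_two_mul] at hh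
      exact hh

lemma sq_one (i : ℕ) (h : SqAt 1 i) : i % 2 = 1 := by
  rcases Nat.even_or_odd i with ⟨m, hm⟩ | ⟨m2, hio⟩
  · exfalso
    have hh := h 0 (by omega)
    rw [show i + 0 + 1 = 2 * m + 1 from by omega,
        show i + 0 = 2 * m from by omega, tm_alt] at hh
    simp at hh
  · omega

lemma sq_three (i : ℕ) (h : SqAt 3 i) : i % 2 = 1 := by
  rcases Nat.even_or_odd i with ⟨m, hm⟩ | ⟨m2, hio⟩
  · exfalso
    have h0 := h 0 (by omega)
    rw [show i + 0 + 3 = 2 * (m + 1) + 1 from by omega,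
        show i + 0 = 2 * m from by omega, tm_two_mul_add_one, tm_two_mul] at h0
    have h1 := h 1 (by omega)
    rw [show i + 1 + 3 = 2 * (m + 2) from by omega,
        show i + 1 = 2 * m + 1 from by omega, tm_two_mul, tm_two_mul_add_one] at h1
    have h2 := h 2 (by omega)
    rw [show i + 2 + 3 = 2 * (m + 2) + 1 from by omega,
        show i + 2 = 2 * (m + 1) from by omega, tm_two_mul_add_one, tm_two_mul] at h2
    -- h0 : !tm (m+1) = tm m, h1 : tm (m+2) = !tm m, h2 : !tm (m+2) = tm (m+1)
    rw [← h2, Bool.not_not] at h0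
    rw [h1] at h0
    simp at h0
  · omega

lemma sq_odd_big (p i : ℕ) (hodd : p % 2 = 1) (h5 : 5 ≤ p) (h : SqAt p i) : False := by
  have halt := alt_of_period p i hodd h
  apply no_overlap 2 (by omega) (i + p)
  intro k hk
  have a1 : tm (i + p + k + 1) = !tm (i + p + k) :=
    halt (i + p + k) (by omega) (by omega)
  have a2 : tm (i + p + k + 2) = !tm (i + p + k + 1) := by
    have := halt (i + p + k + 1) (by omega) (by omega)
    rwa [show i + p + k + 1 + 1 = i + p + k + 2 from by omega] at this
  rw [a2, a1, Bool.not_not]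

lemma sq_not_13 (i : ℕ) (h1 : SqAt 1 i) (h3 : SqAt 3 i) : False := by
  have hodd := sq_one i h1
  obtain ⟨m, hm⟩ : ∃ m, i = 2 * m + 1 := ⟨i / 2, by omega⟩
  have e0 := h3 0 (by omega)
  rw [show i + 0 + 3 = i + 3 from by omega, show i + 0 = i from by omega] at e0
  have e1 := h3 1 (by omega)
  rw [show i + 1 + 3 = i + 4 from by omega] at e1
  have e2 := h1 0 (by omega)
  rw [show i + 0 + 1 = i + 1 from by omega, show i + 0 = i from by omega] at e2
  have a : tm (i + 4) = !tm (i + 3) := by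
    have := tm_alt (m + 2)
    rw [show 2 * (m + 2) + 1 = i + 4 from by omega,
        show 2 * (m + 2) = i + 3 from by omega] at this
    exact this
  have b1 : tm (i + 4) = tm (i + 3) := by rw [e1, e2, ← e0]
  rw [b1] at a
  simp at a

lemma period_unique : ∀ q p i, 1 ≤ p → p ≤ q → SqAt p i → SqAt q i → p = q := by
  intro q
  induction q using Nat.strong_induction_on with
  | _ q IH =>
    intro p i hp hpq hP hQ
    rcases Nat.even_or_odd q with ⟨q', hqe⟩ | ⟨q', hqo⟩
    · -- q even
      have hq2 : q = 2 * q' := by omega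
      have hq'1 : 1 ≤ q' := by omega
      obtain ⟨hie, hQ'⟩ := sq_even q' i hq'1 (hq2 ▸ hQ)
      rcases Nat.even_or_odd p with ⟨p', hpe⟩ | ⟨p', hpo⟩
      · have hp2 : p = 2 * p' := by omega
        have hp'1 : 1 ≤ p' := by omega
        obtain ⟨_, hP'⟩ := sq_even p' i hp'1 (hp2 ▸ hP)
        have := IH q' (by omega) p' (i / 2) hp'1 (by omega) hP' hQ'
        omega
      · -- p odd, but i is even: impossible
        exfalso
        rcases (show p = 1 ∨ p = 3 ∨ 5 ≤ p from by omega) with h1 | h3 | h5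
        · have := sq_one i (h1 ▸ hP); omega
        · have := sq_three i (h3 ▸ hP); omega
        · exact sq_odd_big p i (by omega) h5 hP
    · -- q odd
      rcases (show q = 1 ∨ q = 3 ∨ 5 ≤ q from by omega) with h1 | h3 | h5
      · omega
      · subst h3
        rcases (show p = 1 ∨ p = 2 ∨ p = 3 from by omega) with hp1 | hp2 | hp3
        · exact absurd (sq_not_13 i (hp1 ▸ hP) hQ) (by simp)
        · exfalso
          have he := (sq_even 1 i (by omega) (by rw [show 2 * 1 = 2 from rfl, ← hp2]; exact hP)).1
          have ho := sq_three i hQ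
          omega
        · exact hp3
      · exact absurd (sq_odd_big q i (by omega) h5 hQ) (by simp)

lemma occ_sq {x : List Bool} {i : ℕ} (hx : x ≠ []) (h : OccursAt tm (x ++ x) i) :
    SqAt x.length i := by
  intro k hk
  have l1 := h k (by simp; omega)
  rw [List.getD_append _ _ _ _ hk] at l1
  have l2 := h (x.length + k) (by simp; omega)
  rw [List.getD_append_right _ _ _ _ (by omega),
      show x.length + k - x.length = k from by omega] at l2
  rw [show i + k + x.length = i + (x.length + k) from by omega, ← l2, ← l1]

lemma main_aux (i : ℕ) (x y : List Bool) (hx : x ≠ []) (hy : y ≠ [])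
    (hpq : x.length ≤ y.length)
    (hxx : OccursAt tm (x ++ x) i) (hyy : OccursAt tm (y ++ y) i) : x = y := by
  have hP := occ_sq hx hxx
  have hQ := occ_sq hy hyy
  have hx1 : 1 ≤ x.length := List.length_pos_iff.mpr hx
  have hlen : x.length = y.length := period_unique y.length x.length i hx1 hpq hP hQ
  apply List.ext_getElem hlen
  intro n h1 h2
  have e1 := hxx n (by simp; omega)
  rw [List.getD_append _ _ _ _ h1] at e1
  have e2 := hyy n (by simp; omega)
  rw [List.getD_append _ _ _ _ h2] at e2
  rw [← List.getD_eq_getElem x false h1, ← List.getD_eq_getElem y false h2, e1, e2]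

theorem at_most_one_square (i : ℕ) (x y : List Bool) (hx : x ≠ []) (hy : y ≠ [])
    (hxx : OccursAt tm (x ++ x) i) (hyy : OccursAt tm (y ++ y) i) : x = y := by
  rcases le_total x.length y.length with h | h
  · exact main_aux i x y hx hy h hxx hyy
  · exact (main_aux i y x hy hx h hyy hxx).symm
end

section
/- For distinct words u, v ∈ {00, 010010} and any k ≥ 0, μ^k(v) is neither a proper prefix of u nor has u as a proper prefix; consequently no two distinct words of the form μ^p(u), μ^q(v) with u,v ∈ {00,010010} are such that one is a proper prefix of the other. -/
/-- The set {00, 010010}. -/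
def S : Set (List Bool) :=
  {[false, false], [false, true, false, false, true, false]}

lemma length_iterate_mu (k : ℕ) (w : List Bool) : (mu^[k] w).length = 2 ^ k * w.length := by
  induction k with
  | zero => simp
  | succ k ih => rw [Function.iterate_succ_apply', length_mu, ih, pow_succ]; ring

lemma prefix_of_mu_prefix_mu {x y : List Bool} (h : mu x <+: mu y) : x <+: y := by
  induction x generalizing y with
  | nil => exact List.nil_prefix
  | cons a x ih =>
    cases y with
    | nil => simp at h
    | cons b y =>
      simp only [mu_cons, List.cons_prefix_cons] at h
      exact List.cons_prefix_cons.mpr ⟨h.1, ih h.2.2⟩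

lemma prefix_of_iterate_mu_prefix (k : ℕ) {x y : List Bool} (h : mu^[k] x <+: mu^[k] y) :
    x <+: y := by
  induction k generalizing x y with
  | zero => exact h
  | succ k ih =>
    rw [Function.iterate_succ_apply', Function.iterate_succ_apply'] at h
    exact ih (prefix_of_mu_prefix_mu h)

lemma cons_self_not_prefix_mu (b : Bool) (t w : List Bool) : ¬ b :: b :: t <+: mu w := by
  cases w with
  | nil => simp
  | cons a w => cases a <;> cases b <;> simp [List.cons_prefix_cons]

lemma cons_cons_cons_self_not_prefix_mu (a c b : Bool) (t w : List Bool) :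
    ¬ a :: c :: b :: b :: t <+: mu w := by
  cases w with
  | nil => simp
  | cons d w =>
    simp only [mu_cons, List.cons_prefix_cons, not_and]
    exact fun _ _ => cons_self_not_prefix_mu b t w

lemma not_mem_S_prefix_mu {u : List Bool} (hu : u ∈ S) (w : List Bool) : ¬ u <+: mu w := by
  rcases hu with rfl | rfl
  · exact cons_self_not_prefix_mu false [] w
  · exact cons_cons_cons_self_not_prefix_mu false true false [true, false] w

lemma eq_of_mem_S_of_prefix {u v : List Bool} (hu : u ∈ S) (hv : v ∈ S) (h : u <+: v) :
    u = v := by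
  rcases hu with rfl | rfl <;> rcases hv with rfl | rfl <;> revert h <;> decide

lemma eq_of_mem_S_of_prefix_iterate_mu {u v : List Bool} (hu : u ∈ S) (hv : v ∈ S) {k : ℕ}
    (h : u <+: mu^[k] v) : k = 0 ∧ u = v := by
  cases k with
  | zero => exact ⟨rfl, eq_of_mem_S_of_prefix hu hv h⟩
  | succ k =>
    rw [Function.iterate_succ_apply'] at h
    exact absurd h (not_mem_S_prefix_mu hu _)

lemma not_iterate_mu_prefix_of_mem_S {u v : List Bool} (hu : u ∈ S) (hv : v ∈ S) {k : ℕ}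
    (hk : 0 < k) : ¬ mu^[k] u <+: v := by
  intro h
  have hlen : 4 ≤ (mu^[k] u).length := by
    rw [length_iterate_mu]
    have hu2 : 2 ≤ u.length := by rcases hu with rfl | rfl <;> simp
    exact Nat.mul_le_mul (Nat.le_self_pow hk.ne' 2) hu2
  rcases hv with rfl | rfl
  · exact absurd (hlen.trans h.length_le) (by decide)
  · obtain ⟨k, rfl⟩ := Nat.exists_eq_add_one_of_ne_zero hk.ne'
    have h0100 : [false, true, false, false] <+: mu^[k + 1] u :=
      List.prefix_of_prefix_length_le (by decide) h hlen
    rw [Function.iterate_succ_apply'] at h0100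
    exact cons_cons_cons_self_not_prefix_mu false true false [] _ h0100

theorem no_proper_prefix :
    (∀ u ∈ S, ∀ v ∈ S, u ≠ v → ∀ k : ℕ,
      ¬ (mu^[k] v <+: u ∧ mu^[k] v ≠ u) ∧ ¬ (u <+: mu^[k] v ∧ u ≠ mu^[k] v)) ∧
    (∀ u ∈ S, ∀ v ∈ S, ∀ p q : ℕ, mu^[p] u ≠ mu^[q] v →
      ¬ (mu^[p] u <+: mu^[q] v)) := by
  refine ⟨fun u hu v hv huv k => ⟨?_, ?_⟩, fun u hu v hv p q hne h => ?_⟩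
  · rintro ⟨h, -⟩
    rcases Nat.eq_zero_or_pos k with rfl | hk
    · exact huv (eq_of_mem_S_of_prefix hv hu h).symm
    · exact not_iterate_mu_prefix_of_mem_S hv hu hk h
  · rintro ⟨h, -⟩
    exact huv (eq_of_mem_S_of_prefix_iterate_mu hu hv h).2
  · rcases le_or_gt p q with hpq | hpq
    · obtain ⟨j, rfl⟩ := Nat.exists_eq_add_of_le hpq
      rw [Function.iterate_add_apply] at h hne
      obtain ⟨rfl, rfl⟩ :=
        eq_of_mem_S_of_prefix_iterate_mu hu hv (prefix_of_iterate_mu_prefix p h)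
      exact hne rfl
    · obtain ⟨j, rfl⟩ := Nat.exists_eq_add_of_lt hpq
      rw [add_assoc, Function.iterate_add_apply] at h
      exact not_iterate_mu_prefix_of_mem_S hu hv j.succ_pos (prefix_of_iterate_mu_prefix q h)
end

section
/- For all p ≥ 1, an infinite 7/3 power-free binary word contains only finitely many occurrences of overlaps with period p. -/
namespace OverlapAux

/-- `w` is (strictly) 7/3-power-free, phrased directly on the infinite word. -/
def Free (w : ℕ → Bool) : Prop :=
  ∀ q L i, 1 ≤ q → (∀ k, k + q < L → w (i + k) = w (i + k + q)) → 3 * L < 7 * q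

/-- An overlap of period `p` occurs at position `i`. -/
def Olp (w : ℕ → Bool) (p i : ℕ) : Prop :=
  ∀ k ≤ p, w (i + k) = w (i + k + p)

lemma bh1 : ∀ a b : Bool, a ≠ b → a = !b := by decide
lemma bh2 : ∀ a b : Bool, a ≠ !b → a = b := by decide
lemma btrans : ∀ a b c : Bool, a ≠ b → b ≠ c → a = c := by decide
lemma bflip : ∀ a b : Bool, a = !b → b = !a := by decide
lemma bnotinj : ∀ a b : Bool, (!a) = !b → a = b := by decide

variable {w : ℕ → Bool}

lemma free_of_hfree (w : ℕ → Bool)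
    (hfree : ∀ u q i, OccursAt w u i → 1 ≤ q → HasPeriod u q → 3 * u.length < 7 * q) :
    Free w := by
  intro q L i hq hper
  set u : List Bool := List.ofFn (fun k : Fin L => w (i + k)) with hu
  have hlen : u.length = L := by simp [hu]
  have hget : ∀ j, j < L → u.getD j false = w (i + j) := by
    intro j hj
    rw [List.getD_eq_getElem u false (by omega)]
    simp [hu]
  have hocc : OccursAt w u i := by
    intro j hj
    exact hget j (by omega)
  have hhp : HasPeriod u q := by
    intro j hj
    rw [hlen] at hj
    rw [hget j (by omega), hget (j + q) (by omega)]
    have := hper j (by omega)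
    rw [show i + j + q = i + (j + q) from by omega] at this
    exact this
  have := hfree u q i hocc hq hhp
  rw [hlen] at this
  exact this

lemma no_triple (hf : Free w) (k : ℕ) (h1 : w k = w (k + 1)) (h2 : w (k + 1) = w (k + 2)) :
    False := by
  have key := hf 1 3 k le_rfl ?_
  · omega
  · intro j hj
    rcases (by omega : j = 0 ∨ j = 1) with rfl | rfl
    · show w (k + 0) = w (k + 0 + 1)
      rw [show k + 0 = k from rfl]
      exact h1
    · show w (k + 1) = w (k + 1 + 1)
      rw [show k + 1 + 1 = k + 2 from rfl]
      exact h2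

lemma window (hf : Free w) (k : ℕ) : ∃ j, k ≤ j ∧ j ≤ k + 3 ∧ w j = w (j + 1) := by
  by_contra h
  push_neg at h
  have key := hf 2 5 k (by omega) ?_
  · omega
  · intro j hj
    rcases (by omega : j = 0 ∨ j = 1 ∨ j = 2) with rfl | rfl | rfl
    · show w (k + 0) = w (k + 0 + 2)
      rw [show k + 0 = k from rfl, show k + 0 + 2 = k + 2 from rfl]
      exact btrans _ _ _ (h k (by omega) (by omega)) (h (k + 1) (by omega) (by omega))
    · show w (k + 1) = w (k + 1 + 2)
      rw [show k + 1 + 2 = k + 3 from rfl]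
      exact btrans _ _ _ (h (k + 1) (by omega) (by omega)) (h (k + 2) (by omega) (by omega))
    · show w (k + 2) = w (k + 2 + 2)
      rw [show k + 2 + 2 = k + 4 from rfl]
      exact btrans _ _ _ (h (k + 2) (by omega) (by omega)) (h (k + 3) (by omega) (by omega))

lemma gap3 (hf : Free w) (k : ℕ) (hk : 1 ≤ k) (h1 : w k = w (k + 1))
    (h2 : w (k + 3) = w (k + 4)) : False := by
  obtain ⟨k', rfl⟩ : ∃ k', k = k' + 1 := ⟨k - 1, by omega⟩
  -- rename indices: h1 : w (k'+1) = w (k'+2), h2 : w (k'+4) = w (k'+5)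
  have h1' : w (k' + 1) = w (k' + 2) := by
    rw [show k' + 2 = k' + 1 + 1 from rfl]; exact h1
  have h2' : w (k' + 4) = w (k' + 5) := by
    rw [show k' + 4 = k' + 1 + 3 from rfl, show k' + 5 = k' + 1 + 4 from rfl]; exact h2
  have e3 : w (k' + 3) = !w (k' + 1) := by
    refine bh1 _ _ (fun h => no_triple hf (k' + 1) h1' ?_)
    rw [show k' + 1 + 1 = k' + 2 from rfl, show k' + 1 + 2 = k' + 3 from rfl]
    rw [← h1', h]
  have e4 : w (k' + 4) = w (k' + 1) := by
    refine bh2 _ _ (fun h => no_triple hf (k' + 3) ?_ ?_)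
    · rw [show k' + 3 + 1 = k' + 4 from rfl, e3, h]
    · rw [show k' + 3 + 1 = k' + 4 from rfl, show k' + 3 + 2 = k' + 5 from rfl]
      exact h2'
  have e5 : w (k' + 5) = w (k' + 1) := by rw [← h2']; exact e4
  have e0 : w k' = !w (k' + 1) := by
    refine bh1 _ _ (fun h => no_triple hf k' h ?_)
    rw [show k' + 1 + 1 = k' + 2 from rfl]
    exact h1'
  have e6 : w (k' + 6) = !w (k' + 1) := by
    refine bh1 _ _ (fun h => no_triple hf (k' + 4) h2' ?_)
    rw [show k' + 4 + 1 = k' + 5 from rfl, show k' + 4 + 2 = k' + 6 from rfl]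
    rw [e5, h]
  have key := hf 3 7 k' (by omega) ?_
  · omega
  · intro j hj
    rcases (by omega : j = 0 ∨ j = 1 ∨ j = 2 ∨ j = 3) with rfl | rfl | rfl | rfl
    · show w (k' + 0) = w (k' + 0 + 3)
      rw [show k' + 0 = k' from rfl, show k' + 0 + 3 = k' + 3 from rfl, e0, e3]
    · show w (k' + 1) = w (k' + 1 + 3)
      rw [show k' + 1 + 3 = k' + 4 from rfl, e4]
    · show w (k' + 2) = w (k' + 2 + 3)
      rw [show k' + 2 + 3 = k' + 5 from rfl, e5, ← h1']
    · show w (k' + 3) = w (k' + 3 + 3)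
      rw [show k' + 3 + 3 = k' + 6 from rfl, e3, e6]

lemma parity (hf : Free w) :
    ∀ d k, 1 ≤ k → d % 2 = 1 → w k = w (k + 1) → w (k + d) = w (k + d + 1) → False := by
  intro d
  induction d using Nat.strong_induction_on with
  | _ d ih =>
    intro k hk hdodd h1 h2
    rcases (by omega : d = 1 ∨ d = 3 ∨ 5 ≤ d) with rfl | rfl | hd5
    · exact no_triple hf k h1 (by rw [show k + 2 = k + 1 + 1 from rfl]; exact h2)
    · exact gap3 hf k hk h1 (by rw [show k + 4 = k + 3 + 1 from rfl]; exact h2)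
    · obtain ⟨j, hj1, hj2, hjD⟩ := window hf (k + 1)
      rcases (by omega : j = k + 1 ∨ j = k + 2 ∨ j = k + 3 ∨ j = k + 4)
        with rfl | rfl | rfl | rfl
      · exact no_triple hf k h1 (by rw [show k + 2 = k + 1 + 1 from rfl]; exact hjD)
      · refine ih (d - 2) (by omega) (k + 2) (by omega) (by omega) hjD ?_
        rw [show k + 2 + (d - 2) = k + d from by omega]
        exact h2
      · exact gap3 hf k hk h1 (by rw [show k + 4 = k + 3 + 1 from rfl]; exact hjD)
      · refine ih (d - 4) (by omega) (k + 4) (by omega) (by omega) hjD ?_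
        rw [show k + 4 + (d - 4) = k + d from by omega]
        exact h2

lemma opp (hf : Free w) {a b : ℕ} (ha : 1 ≤ a) (hb : 1 ≤ b) (hab : (a + b) % 2 = 1)
    (h1 : w a = w (a + 1)) (h2 : w b = w (b + 1)) : False := by
  rcases lt_trichotomy a b with h | rfl | h
  · refine parity hf (b - a) a ha (by omega) h1 ?_
    rw [show a + (b - a) = b from by omega]
    exact h2
  · omega
  · refine parity hf (a - b) b hb (by omega) h2 ?_
    rw [show b + (a - b) = a from by omega]
    exact h1

lemma exists_offset (hf : Free w) :
    ∃ t, 1 ≤ t ∧ t ≤ 2 ∧ ∀ m, w (t + 2 * m) ≠ w (t + 2 * m + 1) := by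
  obtain ⟨j, hj1, hj2, hjD⟩ := window hf 1
  by_cases hp : j % 2 = 1
  · refine ⟨2, by omega, le_rfl, fun m heq => ?_⟩
    exact opp hf hj1 (by omega) (by omega) hjD heq
  · refine ⟨1, le_rfl, by omega, fun m heq => ?_⟩
    exact opp hf hj1 (by omega) (by omega) hjD heq

lemma free_y (hf : Free w) {t : ℕ} (hd : ∀ m, w (t + 2 * m) ≠ w (t + 2 * m + 1)) :
    Free (fun m => w (t + 2 * m)) := by
  intro q L j hq hper
  have key := hf (2 * q) (2 * L) (t + 2 * j) (by omega) ?_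
  · omega
  · intro k hk
    rcases Nat.even_or_odd k with ⟨m, rfl⟩ | ⟨m, rfl⟩
    · have h := hper m (by omega)
      simp only at h
      rw [show t + 2 * j + (m + m) + 2 * q = t + 2 * (j + m + q) from by omega,
        show t + 2 * j + (m + m) = t + 2 * (j + m) from by omega]
      exact h
    · have h := hper m (by omega)
      simp only at h
      have e1 : w (t + 2 * (j + m) + 1) = !w (t + 2 * (j + m)) :=
        bh1 _ _ (Ne.symm (hd (j + m)))
      have e2 : w (t + 2 * (j + m + q) + 1) = !w (t + 2 * (j + m + q)) :=
        bh1 _ _ (Ne.symm (hd (j + m + q)))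
      rw [show t + 2 * j + (2 * m + 1) + 2 * q = t + 2 * (j + m + q) + 1 from by omega,
        show t + 2 * j + (2 * m + 1) = t + 2 * (j + m) + 1 from by omega,
        e1, e2, h]

lemma main : ∀ p, ∀ w : ℕ → Bool, 1 ≤ p → Free w → {i | Olp w p i}.Finite := by
  intro p
  induction p using Nat.strong_induction_on with
  | _ p ih =>
    intro w hp hf
    by_cases hp3 : p ≤ 3
    · have hempty : {i | Olp w p i} = ∅ := by
        ext i
        simp only [Set.mem_setOf_eq, Set.mem_empty_iff_false, iff_false]
        intro hi
        have := hf p (2 * p + 1) i hp (fun k hk => hi k (by omega))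
        omega
      rw [hempty]
      exact Set.finite_empty
    · obtain ⟨t, ht1, ht2, hd⟩ := exists_offset hf
      have hfy : Free (fun m => w (t + 2 * m)) := free_y hf hd
      rcases Nat.even_or_odd p with ⟨q, hpq⟩ | ⟨d, hpd⟩
      · -- p = q + q, q ≥ 2
        have hfin := ih q (by omega) (fun m => w (t + 2 * m)) (by omega) hfy
        have hkey : ∀ i, Olp w p i → t ≤ i →
            Olp (fun m => w (t + 2 * m)) q ((i - t) / 2) := by
          intro i hi hti
          rcases Nat.even_or_odd (i - t) with ⟨m, hm⟩ | ⟨m, hm⟩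
          · rw [show (i - t) / 2 = m from by omega]
            intro k hk
            show w (t + 2 * (m + k)) = w (t + 2 * (m + k + q))
            have h := hi (2 * k) (by omega)
            rw [show t + 2 * (m + k) = i + 2 * k from by omega,
              show t + 2 * (m + k + q) = i + 2 * k + p from by omega]
            exact h
          · rw [show (i - t) / 2 = m from by omega]
            intro k hk
            show w (t + 2 * (m + k)) = w (t + 2 * (m + k + q))
            have h := hi (2 * k) (by omega)
            rw [show i + 2 * k + p = t + 2 * (m + k + q) + 1 from by omega,
              show i + 2 * k = t + 2 * (m + k) + 1 from by omega,
              bh1 _ _ (Ne.symm (hd (m + k))), bh1 _ _ (Ne.symm (hd (m + k + q)))] at h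
            exact bnotinj _ _ h
        have hsub : {i | Olp w p i} ⊆ Set.Iio t ∪
            ((fun m => t + 2 * m) '' {m | Olp (fun m => w (t + 2 * m)) q m} ∪
             (fun m => t + 2 * m + 1) '' {m | Olp (fun m => w (t + 2 * m)) q m}) := by
          intro i hi
          by_cases hti : i < t
          · exact Set.mem_union_left _ hti
          · have h := hkey i hi (by omega)
            rcases (by omega : i = t + 2 * ((i - t) / 2) ∨ i = t + 2 * ((i - t) / 2) + 1)
              with he | he
            · exact Set.mem_union_right _ (Set.mem_union_left _ ⟨(i - t) / 2, h, he.symm⟩)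
            · exact Set.mem_union_right _ (Set.mem_union_right _ ⟨(i - t) / 2, h, he.symm⟩)
        exact Set.Finite.subset
          ((Set.finite_Iio t).union ((hfin.image _).union (hfin.image _))) hsub
      · -- p = 2d+1, d ≥ 2
        have hd2 : 2 ≤ d := by omega
        refine (Set.finite_Iio t).subset ?_
        intro i hi
        simp only [Set.mem_setOf_eq] at hi
        by_contra hti
        have hti' : t ≤ i := by simpa using hti
        rcases Nat.even_or_odd (i - t) with ⟨m, hm⟩ | ⟨m, hm⟩
        · have h0 := hi 0 (by omega)
          have h1 := hi 1 (by omega)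
          have h2 := hi 2 (by omega)
          have h3 := hi 3 (by omega)
          rw [show i + 0 + p = t + 2 * (m + d) + 1 from by omega,
            show i + 0 = t + 2 * m from by omega,
            bh1 _ _ (Ne.symm (hd (m + d)))] at h0
          rw [show i + 1 + p = t + 2 * (m + d + 1) from by omega,
            show i + 1 = t + 2 * m + 1 from by omega,
            bh1 _ _ (Ne.symm (hd m))] at h1
          rw [show i + 2 + p = t + 2 * (m + d + 1) + 1 from by omega,
            show i + 2 = t + 2 * (m + 1) from by omega,
            bh1 _ _ (Ne.symm (hd (m + d + 1)))] at h2
          rw [show i + 3 + p = t + 2 * (m + d + 2) from by omega,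
            show i + 3 = t + 2 * (m + 1) + 1 from by omega,
            bh1 _ _ (Ne.symm (hd (m + 1)))] at h3
          -- h0 : w (t+2m) = !w (t+2(m+d))
          -- h1 : !w (t+2m) = w (t+2(m+d+1))
          -- h2 : w (t+2(m+1)) = !w (t+2(m+d+1))
          -- h3 : !w (t+2(m+1)) = w (t+2(m+d+2))
          have g1 : w (t + 2 * (m + d)) = w (t + 2 * (m + d + 1)) := by
            rw [← h1]
            exact bflip _ _ h0
          have g2 : w (t + 2 * (m + d + 1)) = w (t + 2 * (m + d + 2)) := by
            rw [← h3]
            exact bflip _ _ h2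
          have key := hfy 1 3 (m + d) le_rfl ?_
          · omega
          · intro j hj
            rcases (by omega : j = 0 ∨ j = 1) with rfl | rfl
            · show w (t + 2 * (m + d + 0)) = w (t + 2 * (m + d + 0 + 1))
              rw [show m + d + 0 = m + d from rfl, show m + d + 0 + 1 = m + d + 1 from rfl]
              exact g1
            · show w (t + 2 * (m + d + 1)) = w (t + 2 * (m + d + 1 + 1))
              rw [show m + d + 1 + 1 = m + d + 2 from rfl]
              exact g2
        · have h1 := hi 1 (by omega)
          have h2 := hi 2 (by omega)
          have h3 := hi 3 (by omega)
          have h4 := hi 4 (by omega)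
          rw [show i + 1 + p = t + 2 * (m + d + 1) + 1 from by omega,
            show i + 1 = t + 2 * (m + 1) from by omega,
            bh1 _ _ (Ne.symm (hd (m + d + 1)))] at h1
          rw [show i + 2 + p = t + 2 * (m + d + 2) from by omega,
            show i + 2 = t + 2 * (m + 1) + 1 from by omega,
            bh1 _ _ (Ne.symm (hd (m + 1)))] at h2
          rw [show i + 3 + p = t + 2 * (m + d + 2) + 1 from by omega,
            show i + 3 = t + 2 * (m + 2) from by omega,
            bh1 _ _ (Ne.symm (hd (m + d + 2)))] at h3
          rw [show i + 4 + p = t + 2 * (m + d + 3) from by omega,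
            show i + 4 = t + 2 * (m + 2) + 1 from by omega,
            bh1 _ _ (Ne.symm (hd (m + 2)))] at h4
          -- h1 : w (t+2(m+1)) = !w (t+2(m+d+1))
          -- h2 : !w (t+2(m+1)) = w (t+2(m+d+2))
          -- h3 : w (t+2(m+2)) = !w (t+2(m+d+2))
          -- h4 : !w (t+2(m+2)) = w (t+2(m+d+3))
          have g1 : w (t + 2 * (m + d + 1)) = w (t + 2 * (m + d + 2)) := by
            rw [← h2]
            exact bflip _ _ h1
          have g2 : w (t + 2 * (m + d + 2)) = w (t + 2 * (m + d + 3)) := by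
            rw [← h4]
            exact bflip _ _ h3
          have key := hfy 1 3 (m + d + 1) le_rfl ?_
          · omega
          · intro j hj
            rcases (by omega : j = 0 ∨ j = 1) with rfl | rfl
            · show w (t + 2 * (m + d + 1 + 0)) = w (t + 2 * (m + d + 1 + 0 + 1))
              rw [show m + d + 1 + 0 = m + d + 1 from rfl,
                show m + d + 1 + 0 + 1 = m + d + 2 from rfl]
              exact g1
            · show w (t + 2 * (m + d + 1 + 1)) = w (t + 2 * (m + d + 1 + 1 + 1))
              rw [show m + d + 1 + 1 = m + d + 2 from rfl,
                show m + d + 1 + 1 + 1 = m + d + 3 from rfl]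
              exact g2

end OverlapAux

theorem finitely_many_overlaps_of_period (p : ℕ) (hp : 1 ≤ p) (w : ℕ → Bool)
    (hfree : ∀ u q i, OccursAt w u i → 1 ≤ q → HasPeriod u q → 3 * u.length < 7 * q) :
    {i : ℕ | ∃ u, OccursAt w u i ∧ HasPeriod u p ∧ 2 * p < u.length}.Finite := by
  have hfw : OverlapAux.Free w := OverlapAux.free_of_hfree w hfree
  refine (OverlapAux.main p w hp hfw).subset ?_
  rintro i ⟨u, hocc, hper, hlen⟩
  intro k hk
  have h1 := hper k (by omega)
  have h2 := hocc k (by omega)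
  have h3 := hocc (k + p) (by omega)
  rw [← h2, h1, h3, show i + (k + p) = i + k + p from by omega]
end

section
/- The fixed point h^ω(0) of the morphism h on {0,1,2,3,4} given by h(0)=0134, h(1)=2134, h(2)=3234, h(3)=2321, h(4)=3421 contains none of the 2-letter subwords 11, 14, 22, 24, 31, 33, 41, 44, 12, 43. -/
/-- The morphism h on {0,1,2,3,4}: h(0)=0134, h(1)=2134, h(2)=3234, h(3)=2321, h(4)=3421. -/
def hm : Fin 5 → List (Fin 5) :=
  ![[0, 1, 3, 4], [2, 1, 3, 4], [3, 2, 3, 4], [2, 3, 2, 1], [3, 4, 2, 1]]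

/-- The iterates hⁿ(0). -/
def hIter : ℕ → List (Fin 5)
  | 0 => [0]
  | n + 1 => (hIter n).flatMap hm

/-- The fixed point h^ω(0): its n-th letter is the n-th letter of h^{n+1}(0). -/
def hOmega (n : ℕ) : Fin 5 := (hIter (n + 1)).getD n 0

/-!
The seven two-letter words 01, 13, 21, 23, 32, 34, 42 form a set `G` that is closed under `h`:
every image `h(a)` has all its adjacent pairs in `G`, and for `ab ∈ G` the pair formed by the last
letter of `h(a)` and the first letter of `h(b)` lies in `G` again. By induction every `hⁿ(0)` has
all its adjacent pairs in `G`, hence so has `h^ω(0)`, and `G` contains none of the ten words.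
-/

theorem List.IsChain.flatMap {α β : Type*} {R : α → α → Prop} {S : β → β → Prop}
    {σ : α → List β} (hne : ∀ a, σ a ≠ []) (hσ : ∀ a, (σ a).IsChain S)
    (hlink : ∀ a b, R a b → ∀ x ∈ (σ a).getLast?, ∀ y ∈ (σ b).head?, S x y)
    {l : List α} (hl : l.IsChain R) : (l.flatMap σ).IsChain S := by
  rw [List.flatMap_def, List.isChain_flatten (by simpa using fun a _ => (hne a).symm)]
  exact ⟨by simpa using fun a _ => hσ a, (List.isChain_map σ).2 (hl.imp hlink)⟩

theorem List.length_flatMap_of_length_eq_s17 {α β : Type*} {σ : α → List β} {k : ℕ}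
    (hσ : ∀ a, (σ a).length = k) (l : List α) : (l.flatMap σ).length = l.length * k := by
  simp [hσ]

def admissiblePairs : Finset (Fin 5 × Fin 5) :=
  {(0, 1), (1, 3), (2, 1), (2, 3), (3, 2), (3, 4), (4, 2)}

def Admissible (a b : Fin 5) : Prop := (a, b) ∈ admissiblePairs

theorem hm_ne_nil : ∀ a, hm a ≠ [] := by decide

theorem isChain_hm : ∀ a, (hm a).IsChain Admissible := by
  unfold Admissible; decide

theorem admissible_hm_getLast_head : ∀ a b, Admissible a b →
    ∀ x ∈ (hm a).getLast?, ∀ y ∈ (hm b).head?, Admissible x y := by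
  unfold Admissible; decide

theorem isChain_hIter (n : ℕ) : (hIter n).IsChain Admissible := by
  induction n with
  | zero => exact List.isChain_singleton 0
  | succ n ih => exact ih.flatMap hm_ne_nil isChain_hm admissible_hm_getLast_head

theorem length_hIter (n : ℕ) : (hIter n).length = 4 ^ n := by
  induction n with
  | zero => rfl
  | succ n ih => rw [hIter, List.length_flatMap_of_length_eq_s17 (k := 4) (by decide), ih, pow_succ]

theorem lt_length_hIter (n : ℕ) : n < (hIter n).length :=
  length_hIter n ▸ Nat.lt_pow_self (by norm_num)

theorem hIter_prefix_succ (n : ℕ) : hIter n <+: hIter (n + 1) := by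
  induction n with
  | zero => exact ⟨[1, 3, 4], rfl⟩
  | succ n ih => exact ih.flatMap hm

theorem hIter_prefix_of_le {m n : ℕ} (h : m ≤ n) : hIter m <+: hIter n := by
  induction n, h using Nat.le_induction with
  | base => exact List.prefix_refl _
  | succ n _ ih => exact ih.trans (hIter_prefix_succ n)

theorem hOmega_eq_getElem {i m : ℕ} (hi : i < (hIter m).length) : hOmega i = (hIter m)[i] := by
  have hi' : i < (hIter (i + 1)).length := (lt_length_hIter (i + 1)).trans' (Nat.lt_succ_self i)
  rw [hOmega, List.getD_eq_getElem _ _ hi']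
  rcases le_total (i + 1) m with h | h
  · exact (hIter_prefix_of_le h).getElem hi'
  · exact ((hIter_prefix_of_le h).getElem hi).symm

theorem admissible_hOmega (i : ℕ) : Admissible (hOmega i) (hOmega (i + 1)) := by
  have hlen := lt_length_hIter (i + 1)
  rw [hOmega_eq_getElem (Nat.lt_of_succ_lt hlen), hOmega_eq_getElem hlen]
  exact List.isChain_iff_getElem.mp (isChain_hIter _) i hlen

theorem no_bad_two_letter_subwords :
    ∀ i : ℕ, (hOmega i, hOmega (i + 1)) ∉
      ({(1, 1), (1, 4), (2, 2), (2, 4), (3, 1), (3, 3), (4, 1), (4, 4), (1, 2), (4, 3)} :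
        Set (Fin 5 × Fin 5)) := by
  have hdisj : ∀ p ∈ admissiblePairs, p ∉
      ({(1, 1), (1, 4), (2, 2), (2, 4), (3, 1), (3, 3), (4, 1), (4, 4), (1, 2), (4, 3)} :
        Set (Fin 5 × Fin 5)) := by
    simp only [Set.mem_insert_iff, Set.mem_singleton_iff]
    decide
  exact fun i => hdisj _ (admissible_hOmega i)
end
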